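/- arXiv:2208.09833 — 3 statements merged into one kernel-verified Lean document; each statement's English description precedes it below -/
import Mathlib

section
/- Let M ≥ 1, let c ∈ {1,…,M}, and let p, q ∈ ℝ^M be probability vectors with p^c > 0 and q^c > 0. Then JSD(p, e_c) − JSD(q, e_c) = (1/2)·(f(p^c) − f(q^c)), where f(u) = u·log₂ u − (u+1)·log₂(u+1). In particular, the difference of the Jensen–Shannon divergences of two prediction vectors to the one-hot vector of class c is determined solely by their prediction confidences p^c and q^c on the observed class c. -/
open Finset

/-- KL divergence (base-2 log) with the convention `0 · log₂(0/x) = 0`. -/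
noncomputable def KL {M : ℕ} (u v : Fin M → ℝ) : ℝ :=
  ∑ d, if u d = 0 then 0 else u d * Real.logb 2 (u d / v d)

/-- Jensen–Shannon divergence (base-2 log). -/
noncomputable def JSD {M : ℕ} (u v : Fin M → ℝ) : ℝ :=
  (1 / 2) * KL u (fun d => (u d + v d) / 2) + (1 / 2) * KL v (fun d => (u d + v d) / 2)

/-- One-hot vector of class `c`. -/
noncomputable def oneHot {M : ℕ} (c : Fin M) : Fin M → ℝ := fun d => if d = c then 1 else 0

/-- A probability vector: nonnegative entries summing to 1. -/
def IsProbVec {M : ℕ} (p : Fin M → ℝ) : Prop := (∀ d, 0 ≤ p d) ∧ ∑ d, p d = 1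

/-- The auxiliary function `f u = u * logb 2 u - (u+1) * logb 2 (u+1)`. -/
noncomputable def f (u : ℝ) : ℝ := u * Real.logb 2 u - (u + 1) * Real.logb 2 (u + 1)

lemma jsd_onehot {M : ℕ} (c : Fin M) (p : Fin M → ℝ)
    (hp : IsProbVec p) (hpc : 0 < p c) :
    JSD p (oneHot c) = 1 + (1 / 2) * f (p c) := by
  obtain ⟨hnn, hsum⟩ := hp
  have hpc1 : (0:ℝ) < p c + 1 := by linarith
  unfold JSD KL oneHot f
  have h2 : Real.logb 2 2 = 1 := by simp
  -- second KL
  have hKL2 : (∑ d, if (if d = c then (1:ℝ) else 0) = 0 then 0 else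
      (if d = c then (1:ℝ) else 0) * Real.logb 2 ((if d = c then (1:ℝ) else 0) / ((p d + if d = c then 1 else 0) / 2)))
      = 1 - Real.logb 2 (p c + 1) := by
    rw [Finset.sum_eq_single c]
    · norm_num
      rw [Real.logb_div (by norm_num) (by positivity), h2]
    · intro b _ hb
      simp [hb]
    · simp
  rw [hKL2]
  -- first KL
  have hKL1 : (∑ d, if p d = 0 then 0 else
      p d * Real.logb 2 (p d / ((p d + if d = c then 1 else 0) / 2)))
      = 1 + p c * (Real.logb 2 (p c) - Real.logb 2 (p c + 1)) := by
    rw [← Finset.sum_erase_add _ _ (mem_univ c)]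
    have he : ∀ d ∈ univ.erase c, (if p d = 0 then 0 else
        p d * Real.logb 2 (p d / ((p d + if d = c then 1 else 0) / 2))) = p d := by
      intro d hd
      rw [if_neg (Finset.ne_of_mem_erase hd)]
      by_cases h0 : p d = 0
      · simp [h0]
      · have hpd : 0 < p d := lt_of_le_of_ne (hnn d) (Ne.symm h0)
        rw [if_neg h0]
        have : p d / ((p d + 0) / 2) = 2 := by field_simp; ring
        rw [this, h2, mul_one]
    rw [Finset.sum_congr rfl he]
    have hsc : ∑ d ∈ univ.erase c, p d = 1 - p c := by
      have := Finset.sum_erase_add univ p (mem_univ c)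
      linarith [hsum ▸ this]
    rw [hsc, if_neg (ne_of_gt hpc), if_pos rfl,
      Real.logb_div (ne_of_gt hpc) (by positivity),
      Real.logb_div (by positivity) (by norm_num), h2]
    ring
  rw [hKL1]
  ring

theorem jsd_diff_eq {M : ℕ} (hM : 1 ≤ M) (c : Fin M) (p q : Fin M → ℝ)
    (hp : IsProbVec p) (hq : IsProbVec q) (hpc : 0 < p c) (hqc : 0 < q c) :
    JSD p (oneHot c) - JSD q (oneHot c) = (1 / 2) * (f (p c) - f (q c)) := by
  rw [jsd_onehot c p hp hpc, jsd_onehot c q hq hqc]; ring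
end

section
/- (Theorem 1: Upper bound of JSD difference.) Let M ≥ 1, let c ∈ {1,…,M}, and let p, q ∈ ℝ^M be probability vectors with 0 < p^c ≤ q^c. Then |JSD(p, e_c) − JSD(q, e_c)| ≤ (1/2)·log₂((p^c + 1)/p^c)·|p^c − q^c|. -/
open Finset

noncomputable def gJSD (x : ℝ) : ℝ :=
  (1 / 2) * (2 + x * Real.logb 2 x - (x + 1) * Real.logb 2 (x + 1))

lemma jsd_eq_g {M : ℕ} (c : Fin M) (p : Fin M → ℝ) (hp : IsProbVec p) (hpc : 0 < p c) :
    JSD p (oneHot c) = gJSD (p c) := by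
  obtain ⟨hp0, hp1⟩ := hp
  have hx := hpc
  have hx1 : (0:ℝ) < p c + 1 := by linarith
  have hKL1 : KL p (fun d => (p d + oneHot c d) / 2)
      = 1 + (p c * Real.logb 2 (2 * p c / (p c + 1)) - p c) := by
    unfold KL
    have key : ∀ d, (if p d = 0 then 0 else p d * Real.logb 2 (p d / ((p d + oneHot c d) / 2)))
        = p d + (if d = c then p c * Real.logb 2 (2 * p c / (p c + 1)) - p c else 0) := by
      intro d
      by_cases hd : d = c
      · subst hd
        have h2 : p d / ((p d + 1) / 2) = 2 * p d / (p d + 1) := by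
          field_simp
        simp only [oneHot, if_pos rfl, if_true]
        rw [if_neg hx.ne', h2]; ring
      · simp only [oneHot, if_neg hd]
        by_cases h0 : p d = 0
        · simp [h0]
        · have hpd : 0 < p d := lt_of_le_of_ne (hp0 d) (Ne.symm h0)
          have h2 : p d / ((p d + 0) / 2) = 2 := by
            rw [add_zero]; field_simp
          simp [h0, h2, Real.logb_self_eq_one]
    rw [Finset.sum_congr rfl (fun d _ => key d), Finset.sum_add_distrib, hp1,
      Finset.sum_ite_eq' Finset.univ c, if_pos (Finset.mem_univ c)]
  have hKL2 : KL (oneHot c) (fun d => (p d + oneHot c d) / 2)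
      = Real.logb 2 (2 / (p c + 1)) := by
    unfold KL
    rw [Finset.sum_eq_single c]
    · have h1 : oneHot c c = 1 := by simp [oneHot]
      rw [h1, if_neg one_ne_zero, one_mul]
      have h3 : ((fun d => (p d + oneHot c d) / 2) c) = (p c + 1) / 2 := by simp [oneHot]
      have h2 : (1:ℝ) / ((p c + 1) / 2) = 2 / (p c + 1) := by field_simp
      rw [h3, h2]
    · intro d _ hd; simp [oneHot, hd]
    · intro h; exact absurd (Finset.mem_univ c) h
  have e1 : Real.logb 2 (2 * p c / (p c + 1))
      = 1 + Real.logb 2 (p c) - Real.logb 2 (p c + 1) := by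
    rw [Real.logb_div (by positivity) hx1.ne', Real.logb_mul (by norm_num) hx.ne']
    simp [Real.logb_self_eq_one]
  have e2 : Real.logb 2 (2 / (p c + 1)) = 1 - Real.logb 2 (p c + 1) := by
    rw [Real.logb_div (by norm_num) hx1.ne']
    simp [Real.logb_self_eq_one]
  unfold JSD gJSD
  rw [hKL1, hKL2, e1, e2]
  ring

lemma hasDerivAt_gJSD {x : ℝ} (hx : 0 < x) :
    HasDerivAt gJSD ((1 / 2) * ((Real.log x - Real.log (x + 1)) / Real.log 2)) x := by
  have hx1 : (0:ℝ) < x + 1 := by linarith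
  have h1 : HasDerivAt (fun y : ℝ => y * Real.log y) (Real.log x + 1) x := by
    have := (hasDerivAt_id x).mul (Real.hasDerivAt_log hx.ne')
    simpa [Pi.mul_def, mul_inv_cancel₀ hx.ne'] using this
  have h2 : HasDerivAt (fun y : ℝ => (y + 1) * Real.log (y + 1)) (Real.log (x + 1) + 1) x := by
    have base : HasDerivAt (fun y : ℝ => y * Real.log y) (Real.log (x + 1) + 1) (x + 1) := by
      have := (hasDerivAt_id (x + 1)).mul (Real.hasDerivAt_log hx1.ne')
      simpa [Pi.mul_def, mul_inv_cancel₀ hx1.ne'] using this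
    have hcomp := base.comp x ((hasDerivAt_id x).add_const 1)
    simpa [Function.comp_def] using hcomp
  have H := (((h1.sub h2).div_const (Real.log 2)).const_add 2).const_mul ((1:ℝ) / 2)
  have hfun : (fun y : ℝ => (1 / 2) * (2 + (y * Real.log y - (y + 1) * Real.log (y + 1)) / Real.log 2)) = gJSD := by
    funext y
    simp only [gJSD, Real.logb]
    ring
  simp only [Pi.sub_apply] at H
  rw [hfun] at H
  refine H.congr_deriv ?_
  ring

theorem jsd_diff_upper_bound {M : ℕ} (hM : 1 ≤ M) (c : Fin M) (p q : Fin M → ℝ)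
    (hp : IsProbVec p) (hq : IsProbVec q) (hpc : 0 < p c) (hpq : p c ≤ q c) :
    |JSD p (oneHot c) - JSD q (oneHot c)| ≤
      (1 / 2) * Real.logb 2 ((p c + 1) / p c) * |p c - q c| := by
  have hqc : 0 < q c := lt_of_lt_of_le hpc hpq
  rw [jsd_eq_g c p hp hpc, jsd_eq_g c q hq hqc]
  set a := p c with ha
  set b := q c with hb
  have hlog2 : (0:ℝ) < Real.log 2 := Real.log_pos (by norm_num)
  set C := (1 / 2) * Real.logb 2 ((a + 1) / a) with hC
  have key : ∀ x ∈ Set.Icc a b,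
      ‖(1 / 2) * ((Real.log x - Real.log (x + 1)) / Real.log 2)‖ ≤ C := by
    intro x hxmem
    have hx : 0 < x := lt_of_lt_of_le hpc hxmem.1
    have hx1 : (0:ℝ) < x + 1 := by linarith
    have hmono : Real.log x ≤ Real.log (x + 1) := Real.log_le_log hx (by linarith)
    rw [Real.norm_eq_abs, abs_mul]
    have e12 : |(1:ℝ)/2| = 1/2 := by norm_num
    have habs : |Real.log x - Real.log (x + 1)| = Real.log (x + 1) - Real.log x := by
      rw [abs_sub_comm, abs_of_nonneg (by linarith)]
    rw [e12, abs_div, abs_of_nonneg (le_of_lt hlog2), habs]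
    have hratio : Real.log (x + 1) - Real.log x ≤ Real.log (a + 1) - Real.log a := by
      have h1 : Real.log (x + 1) - Real.log x = Real.log ((x + 1) / x) :=
        (Real.log_div hx1.ne' hx.ne').symm
      have h2 : Real.log (a + 1) - Real.log a = Real.log ((a + 1) / a) :=
        (Real.log_div (by linarith) hpc.ne').symm
      rw [h1, h2]
      apply Real.log_le_log (by positivity)
      rw [div_le_div_iff₀ hx hpc]
      nlinarith [hxmem.1]
    have hCval : C = (1 / 2) * ((Real.log (a + 1) - Real.log a) / Real.log 2) := by
      rw [hC, Real.logb, Real.log_div (by linarith) hpc.ne']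
    rw [hCval]
    apply mul_le_mul_of_nonneg_left _ (by norm_num)
    exact div_le_div_of_nonneg_right hratio hlog2.le
  have hderiv : ∀ x ∈ Set.Icc a b,
      HasDerivWithinAt gJSD ((1 / 2) * ((Real.log x - Real.log (x + 1)) / Real.log 2)) (Set.Icc a b) x := by
    intro x hxmem
    exact (hasDerivAt_gJSD (lt_of_lt_of_le hpc hxmem.1)).hasDerivWithinAt
  have := Convex.norm_image_sub_le_of_norm_hasDerivWithin_le hderiv key (convex_Icc a b)
    (Set.left_mem_Icc.2 hpq) (Set.right_mem_Icc.2 hpq)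
  rw [Real.norm_eq_abs, Real.norm_eq_abs] at this
  calc |gJSD a - gJSD b| = |gJSD b - gJSD a| := abs_sub_comm _ _
    _ ≤ C * |b - a| := this
    _ = (1 / 2) * Real.logb 2 ((a + 1) / a) * |a - b| := by rw [hC, abs_sub_comm]
end

section
/- Let M ≥ 1, let c ∈ {1,…,M}, and let p, q ∈ ℝ^M be probability vectors with 0 < q^c < p^c. Then JSD(p, e_c) < JSD(q, e_c); that is, the Jensen–Shannon divergence between a prediction vector and the one-hot vector of the observed class c is a strictly decreasing function of the prediction confidence on class c. -/
open Finset

noncomputable def fJ (x : ℝ) : ℝ :=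
  (1 - x) / 2 +
    (x * Real.log x - (1 + x) * Real.log (1 + x) + (1 + x) * Real.log 2) / (2 * Real.log 2)

lemma jsd_eq_fJ {M : ℕ} (c : Fin M) (p : Fin M → ℝ) (hp : IsProbVec p) (hpc : 0 < p c) :
    JSD p (oneHot c) = fJ (p c) := by
  obtain ⟨hnn, hsum⟩ := hp
  have hx : 0 < p c := hpc
  have h1x : (0:ℝ) < 1 + p c := by linarith
  have hlog2 : Real.log 2 ≠ 0 := ne_of_gt (Real.log_pos (by norm_num))
  have hKL1 : KL p (fun d => (p d + oneHot c d) / 2)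
      = p c * Real.logb 2 (p c / ((p c + 1) / 2)) + (1 - p c) := by
    unfold KL
    rw [← Finset.add_sum_erase _ _ (Finset.mem_univ c)]
    have h2 : ∑ d ∈ univ.erase c,
        (if p d = 0 then 0 else p d * Real.logb 2 (p d / ((p d + oneHot c d) / 2)))
        = ∑ d ∈ univ.erase c, p d := by
      apply Finset.sum_congr rfl
      intro d hd
      have hdc : d ≠ c := Finset.ne_of_mem_erase hd
      simp only [oneHot, if_neg hdc, add_zero]
      by_cases h : p d = 0
      · simp [h]
      · rw [if_neg h]
        have hdiv : p d / (p d / 2) = 2 := by field_simp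
        rw [hdiv]
        simp
    rw [h2, Finset.sum_erase_eq_sub (Finset.mem_univ c), hsum]
    simp [oneHot, ne_of_gt hx]
  have hKL2 : KL (oneHot c) (fun d => (p d + oneHot c d) / 2)
      = Real.logb 2 (1 / ((p c + 1) / 2)) := by
    unfold KL
    rw [Finset.sum_eq_single_of_mem c (Finset.mem_univ c)]
    · simp [oneHot]
    · intro d _ hdc
      simp [oneHot, hdc]
  unfold JSD fJ
  rw [hKL1, hKL2]
  have e1 : Real.logb 2 (p c / ((p c + 1) / 2))
      = (Real.log (p c) - Real.log (1 + p c) + Real.log 2) / Real.log 2 := by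
    unfold Real.logb
    rw [Real.log_div (ne_of_gt hx) (by positivity), Real.log_div (by linarith) (by norm_num)]
    ring_nf
  have e2 : Real.logb 2 (1 / ((p c + 1) / 2))
      = (Real.log 2 - Real.log (1 + p c)) / Real.log 2 := by
    unfold Real.logb
    rw [Real.log_div (by norm_num) (by positivity), Real.log_div (by linarith) (by norm_num),
      Real.log_one]
    ring_nf
  rw [e1, e2]
  field_simp
  ring

lemma fJ_strictAnti : StrictAntiOn fJ (Set.Ioi 0) := by
  have hlog2 : (0:ℝ) < Real.log 2 := Real.log_pos (by norm_num)
  have hderiv : ∀ x ∈ Set.Ioi (0:ℝ), HasDerivAt fJ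
      (-1 / 2 + (Real.log x - Real.log (1 + x) + Real.log 2) / (2 * Real.log 2)) x := by
    intro x hx
    have hx0 : (0:ℝ) < x := hx
    have h1x : (0:ℝ) < 1 + x := by linarith
    have h1 : HasDerivAt (fun y : ℝ => y * Real.log y) (Real.log x + 1) x :=
      Real.hasDerivAt_mul_log (ne_of_gt hx0)
    have hinner : HasDerivAt (fun y : ℝ => 1 + y) 1 x := (hasDerivAt_id x).const_add 1
    have h2 : HasDerivAt (fun y : ℝ => (1 + y) * Real.log (1 + y)) (Real.log (1 + x) + 1) x := by
      have := (Real.hasDerivAt_mul_log (ne_of_gt h1x)).comp x hinner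
      simpa [Function.comp_def] using this
    have h3 : HasDerivAt (fun y : ℝ => (1 + y) * Real.log 2) (Real.log 2) x := by
      simpa using hinner.mul_const (Real.log 2)
    have h4 : HasDerivAt (fun y : ℝ => (1 - y) / 2) (-1 / 2) x := by
      have : HasDerivAt (fun y : ℝ => 1 - y) (-1) x := (hasDerivAt_id x).const_sub 1
      simpa using this.div_const 2
    have h5 := (((h1.sub h2).add h3).div_const (2 * Real.log 2))
    have h6 := h4.add h5
    convert h6 using 1
    · rfl
    · rfl
    · rfl
    · ring
  apply strictAntiOn_of_deriv_neg (convex_Ioi 0)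
  · intro x hx
    exact ((hderiv x hx).continuousAt).continuousWithinAt
  · intro x hx
    rw [interior_Ioi] at hx
    rw [(hderiv x hx).deriv]
    have hx0 : (0:ℝ) < x := hx
    have hlt : Real.log x < Real.log (1 + x) := Real.log_lt_log hx0 (by linarith)
    have hnum : Real.log x - Real.log (1 + x) + Real.log 2 < Real.log 2 := by linarith
    have h2l : (0:ℝ) < 2 * Real.log 2 := by linarith
    have := (div_lt_div_iff_of_pos_right h2l).mpr hnum
    have heq : Real.log 2 / (2 * Real.log 2) = 1 / 2 := by
      field_simp
    rw [heq] at this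
    linarith

theorem jsd_strict_anti {M : ℕ} (hM : 1 ≤ M) (c : Fin M) (p q : Fin M → ℝ)
    (hp : IsProbVec p) (hq : IsProbVec q) (hqc : 0 < q c) (hqp : q c < p c) :
    JSD p (oneHot c) < JSD q (oneHot c) := by
  rw [jsd_eq_fJ c p hp (lt_trans hqc hqp), jsd_eq_fJ c q hq hqc]
  exact fJ_strictAnti (Set.mem_Ioi.mpr hqc) (Set.mem_Ioi.mpr (lt_trans hqc hqp)) hqp
end
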